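/- Let M be a preGarside monoid, let f_L be a left selector on A(M) in M and f_R a right selector on A(M) in M, where A(M) is the set of atoms of M (which generates M). Let X ⊆ A(M) and let N be the submonoid of M generated by X. Then N is a parabolic submonoid of M if and only if: (a) for all distinct x,y ∈ X, if x ∨_L y exists then f_L(x,y) ∈ X* and f_L(y,x) ∈ X*, and if x ∨_R y exists then f_R(x,y) ∈ X* and f_R(y,x) ∈ X*; and (b) for all x ∈ X and y ∈ A(M) \ X, if x ∨_L y exists then f_L(x,y) ∉ X*, and if x ∨_R y exists then f_R(y,x) ∉ X*. -/

import Mathlib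

/-!
The conditions are necessary because a parabolic submonoid contains the lcms of any two of
its atoms and, being special, every factor of them; the letters of a selector word then lie
in `X`, and a lcm `x * f_L(x,y) ∈ ⟨X⟩` would put `y` in `⟨X⟩`.

Conversely, `⟨X⟩` is special by induction on the norm: if an atom `y ≠ x` left-divides
`x * t` with `x ∈ X` and `t ∈ ⟨X⟩`, then `x ∨_L y = x * f_L(x,y)` left-divides `x * t`, the
induction hypothesis puts the letters of `f_L(x,y)` in `X`, condition (b) forces `y ∈ X`, and
condition (a) rewrites `x * t` as `y * f_L(y,x) * e` with `f_L(y,x), e ∈ ⟨X⟩`. Closure under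
`∨_L` follows by another induction on the norm of the lcm, splitting off first letters, and
closure under `∨_R` is the same statement in the opposite monoid.
-/

namespace PG

variable {M : Type*} [Monoid M]

/-- `LDvd a b` : `a` left-divides `b`. -/
def LDvd (a b : M) : Prop := ∃ c, b = a * c

/-- `RDvd a b` : `a` right-divides `b`. -/
def RDvd (a b : M) : Prop := ∃ c, b = c * a

/-- A monoid is cancellative if `c * a * d = c * b * d` implies `a = b`. -/
def IsCancellative (M : Type*) [Monoid M] : Prop :=
  ∀ a b c d : M, c * a * d = c * b * d → a = b

/-- A monoid is atomic if it admits a norm `ν : M → ℕ` with `ν a > 0` for `a ≠ 1`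
and `ν (a * b) ≥ ν a + ν b`. -/
def IsAtomicMon (M : Type*) [Monoid M] : Prop :=
  ∃ ν : M → ℕ, (∀ a : M, a ≠ 1 → 0 < ν a) ∧ ∀ a b : M, ν a + ν b ≤ ν (a * b)

/-- `m` is the least common multiple of `a` and `b` for left-divisibility. -/
def IsLcmL (a b m : M) : Prop :=
  LDvd a m ∧ LDvd b m ∧ ∀ c : M, LDvd a c → LDvd b c → LDvd m c

/-- `m` is the least common multiple of `a` and `b` for right-divisibility. -/
def IsLcmR (a b m : M) : Prop :=
  RDvd a m ∧ RDvd b m ∧ ∀ c : M, RDvd a c → RDvd b c → RDvd m c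

/-- `d` is the greatest common left-divisor of `a` and `b`. -/
def IsGcdL (a b d : M) : Prop :=
  LDvd d a ∧ LDvd d b ∧ ∀ c : M, LDvd c a → LDvd c b → LDvd c d

/-- `d` is the greatest common right-divisor of `a` and `b`. -/
def IsGcdR (a b d : M) : Prop :=
  RDvd d a ∧ RDvd d b ∧ ∀ c : M, RDvd c a → RDvd c b → RDvd c d

/-- A preGarside monoid: cancellative, atomic, and any two elements admitting a
common multiple (on the appropriate side) admit a least one. -/
def IsPreGarside (M : Type*) [Monoid M] : Prop :=
  IsCancellative M ∧ IsAtomicMon M ∧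
    (∀ a b : M, (∃ c, LDvd a c ∧ LDvd b c) → ∃ m, IsLcmL a b m) ∧
    (∀ a b : M, (∃ c, RDvd a c ∧ RDvd b c) → ∃ m, IsLcmR a b m)

/-- A submonoid is special if it is closed under factors. -/
def IsSpecial (N : Submonoid M) : Prop := ∀ a b : M, a * b ∈ N → a ∈ N ∧ b ∈ N

/-- A (standard) parabolic submonoid: special and closed under all existing lcms. -/
def IsParabolic (N : Submonoid M) : Prop :=
  IsSpecial N ∧ (∀ a b m : M, a ∈ N → b ∈ N → IsLcmL a b m → m ∈ N) ∧
    ∀ a b m : M, a ∈ N → b ∈ N → IsLcmR a b m → m ∈ N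

/-- `b` is a factor of `a`. -/
def Factor (b a : M) : Prop := ∃ c d : M, a = c * b * d

/-- The set of factors of `a`. -/
def Factors (a : M) : Set M := {b | Factor b a}

/-- An element is balanced when its left-divisors and right-divisors coincide. -/
def IsBalanced (a : M) : Prop := {b : M | LDvd b a} = {b : M | RDvd b a}

/-- A Garside element: balanced, and its factors generate the monoid. -/
def IsGarsideElt (Δ : M) : Prop := IsBalanced Δ ∧ Submonoid.closure (Factors Δ) = ⊤

/-- A Garside monoid: a preGarside monoid possessing a Garside element. -/
def IsGarside (M : Type*) [Monoid M] : Prop := IsPreGarside M ∧ ∃ Δ : M, IsGarsideElt Δ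

/-- The factors of `a` computed inside the submonoid `N`. -/
def FactorsIn (N : Submonoid M) (a : M) : Set M :=
  {b | b ∈ N ∧ ∃ c ∈ N, ∃ d ∈ N, a = c * b * d}

/-- `Δ` is a Garside element of the submonoid `N`: it is balanced in `N` and its
factors in `N` generate `N`. -/
def IsGarsideEltIn (N : Submonoid M) (Δ : M) : Prop :=
  Δ ∈ N ∧ ({b : M | b ∈ N ∧ ∃ c ∈ N, Δ = b * c} = {b : M | b ∈ N ∧ ∃ c ∈ N, Δ = c * b}) ∧
    Submonoid.closure (FactorsIn N Δ) = N

/-- The right coset `g * N` (an `R_N`-class). -/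
def RCoset (N : Submonoid M) (g : M) : Set M := {x | ∃ h ∈ N, x = g * h}

/-- The left coset `N * g` (an `L_N`-class). -/
def LCoset (N : Submonoid M) (g : M) : Set M := {x | ∃ h ∈ N, x = h * g}

/-- `RReduces N B A` : the `R_N`-class `B` reduces in one step to the `R_N`-class `A`,
i.e. `A = g₁ N`, `B = g₂ N` with `g₂ ∈ g₁ N` and `g₁ ∉ g₂ N`. -/
def RReduces (N : Submonoid M) (B A : Set M) : Prop :=
  ∃ g₁ g₂ : M, A = RCoset N g₁ ∧ B = RCoset N g₂ ∧ g₂ ∈ RCoset N g₁ ∧ g₁ ∉ RCoset N g₂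

/-- `LReduces N B A` : the `L_N`-class `B` reduces in one step to the `L_N`-class `A`. -/
def LReduces (N : Submonoid M) (B A : Set M) : Prop :=
  ∃ g₁ g₂ : M, A = LCoset N g₁ ∧ B = LCoset N g₂ ∧ g₂ ∈ LCoset N g₁ ∧ g₁ ∉ LCoset N g₂

/-- `N` has the `R` confluence property: the reduction rule on `R_N`-classes is
Noetherian and locally confluent. -/
def RConfluence (N : Submonoid M) : Prop :=
  (¬ ∃ f : ℕ → Set M, ∀ n : ℕ, RReduces N (f n) (f (n + 1))) ∧
    ∀ C A B : Set M, RReduces N C A → RReduces N C B →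
      ∃ D : Set M, Relation.ReflTransGen (RReduces N) A D ∧
        Relation.ReflTransGen (RReduces N) B D

/-- `N` has the `L` confluence property. -/
def LConfluence (N : Submonoid M) : Prop :=
  (¬ ∃ f : ℕ → Set M, ∀ n : ℕ, LReduces N (f n) (f (n + 1))) ∧
    ∀ C A B : Set M, LReduces N C A → LReduces N C B →
      ∃ D : Set M, Relation.ReflTransGen (LReduces N) A D ∧
        Relation.ReflTransGen (LReduces N) B D

/-- `N` has the confluence property. -/
def Confluence (N : Submonoid M) : Prop := RConfluence N ∧ LConfluence N

/-- The `R_N`-class `C` is minimal: whenever `g` represents `C` and `g = g' * h` with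
`h ∈ N`, one has `g' N = C`. -/
def IsMinimalRCoset (N : Submonoid M) (C : Set M) : Prop :=
  (∃ g : M, C = RCoset N g) ∧
    ∀ g g' h : M, h ∈ N → C = RCoset N g → g = g' * h → RCoset N g' = C

/-- The `L_N`-class `C` is minimal. -/
def IsMinimalLCoset (N : Submonoid M) (C : Set M) : Prop :=
  (∃ g : M, C = LCoset N g) ∧
    ∀ g g' h : M, h ∈ N → C = LCoset N g → g = h * g' → LCoset N g' = C

/-- The set of atoms of `M`. -/
def AtomSet (M : Type*) [Monoid M] : Set M :=
  {a | a ≠ 1 ∧ ∀ b c : M, a = b * c → b = 1 ∨ c = 1}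

/-- `|x|` : the least number of factors of `Δ` needed to write `x` as a product. -/
noncomputable def lenFactors (Δ x : M) : ℕ :=
  sInf {k | ∃ l : List M, l.length = k ∧ (∀ y ∈ l, y ∈ Factors Δ) ∧ l.prod = x}

section Amalgam

variable {M₁ M₂ N : Type*} [Monoid M₁] [Monoid M₂] [Monoid N]

/-- The congruence on the free product `M₁ ∗ M₂` identifying `ι₁ h` with `ι₂ h`
for every `h ∈ N`. -/
def amalgamCon (ι₁ : N →* M₁) (ι₂ : N →* M₂) : Con (Monoid.Coprod M₁ M₂) :=
  conGen fun a b => ∃ h : N, a = Monoid.Coprod.inl (ι₁ h) ∧ b = Monoid.Coprod.inr (ι₂ h)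

/-- The amalgamated product `M₁ *_N M₂` : the pushout of `ι₁ : N →* M₁` and
`ι₂ : N →* M₂` in the category of monoids. -/
def Amalgam (ι₁ : N →* M₁) (ι₂ : N →* M₂) : Type _ := (amalgamCon ι₁ ι₂).Quotient

instance (ι₁ : N →* M₁) (ι₂ : N →* M₂) : Monoid (Amalgam ι₁ ι₂) :=
  inferInstanceAs (Monoid (amalgamCon ι₁ ι₂).Quotient)

/-- The canonical morphism `M₁ →* M₁ *_N M₂`. -/
def amalgamInl (ι₁ : N →* M₁) (ι₂ : N →* M₂) : M₁ →* Amalgam ι₁ ι₂ :=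
  (amalgamCon ι₁ ι₂).mk'.comp Monoid.Coprod.inl

/-- The canonical morphism `M₂ →* M₁ *_N M₂`. -/
def amalgamInr (ι₁ : N →* M₁) (ι₂ : N →* M₂) : M₂ →* Amalgam ι₁ ι₂ :=
  (amalgamCon ι₁ ι₂).mk'.comp Monoid.Coprod.inr

end Amalgam

open Submonoid MulOpposite

theorem IsCancellative.isCancelMul (h : IsCancellative M) : IsCancelMul M where
  mul_left_cancel a b c hab := h b c a 1 (by simpa using hab)
  mul_right_cancel a b c hab := h b c 1 a (by simpa using hab)

def IsAtomicNorm (ν : M → ℕ) : Prop :=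
  (∀ a : M, a ≠ 1 → 0 < ν a) ∧ ∀ a b : M, ν a + ν b ≤ ν (a * b)

namespace IsAtomicNorm

variable {ν : M → ℕ}

theorem le_mul_left (hν : IsAtomicNorm ν) (a b : M) : ν b ≤ ν (a * b) :=
  (Nat.le_add_left _ _).trans (hν.2 a b)

theorem lt_mul_left (hν : IsAtomicNorm ν) {a : M} (ha : a ≠ 1) (b : M) : ν b < ν (a * b) :=
  (Nat.lt_add_of_pos_left (hν.1 a ha)).trans_le (hν.2 a b)

theorem eq_one_of_mul_eq_one_left (hν : IsAtomicNorm ν) {a b : M} (h : a * b = 1) : a = 1 := by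
  by_contra ha
  have h₁ := hν.2 1 1
  have h₂ := hν.2 a b
  have h₃ := hν.1 a ha
  rw [mul_one] at h₁
  rw [h] at h₂
  omega

theorem le_of_ldvd (hν : IsAtomicNorm ν) {a b : M} (h : LDvd a b) : ν a ≤ ν b := by
  obtain ⟨c, rfl⟩ := h
  exact (Nat.le_add_right _ _).trans (hν.2 a c)

theorem comp_unop (hν : IsAtomicNorm ν) : IsAtomicNorm (ν ∘ unop : Mᵐᵒᵖ → ℕ) :=
  ⟨fun a ha => hν.1 a.unop (unop_eq_one_iff a |>.not.2 ha),
    fun a b => (add_comm _ _).trans_le (hν.2 b.unop a.unop)⟩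

end IsAtomicNorm

section Divisibility

variable {a b c m x y : M}

theorem LDvd.refl (a : M) : LDvd a a := ⟨1, (mul_one a).symm⟩

theorem one_ldvd (a : M) : LDvd 1 a := ⟨a, (one_mul a).symm⟩

theorem ldvd_mul_right (a b : M) : LDvd a (a * b) := ⟨b, rfl⟩

theorem LDvd.trans (h₁ : LDvd a b) (h₂ : LDvd b c) : LDvd a c := by
  obtain ⟨d, rfl⟩ := h₁
  obtain ⟨e, rfl⟩ := h₂
  exact ⟨d * e, mul_assoc _ _ _⟩

theorem LDvd.mul_left (h : LDvd a b) (x : M) : LDvd (x * a) (x * b) := by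
  obtain ⟨d, rfl⟩ := h
  exact ⟨d, (mul_assoc _ _ _).symm⟩

theorem LDvd.of_mul_left [IsLeftCancelMul M] (h : LDvd (x * a) (x * b)) : LDvd a b := by
  obtain ⟨d, hd⟩ := h
  exact ⟨d, mul_left_cancel (hd.trans (mul_assoc _ _ _))⟩

theorem LDvd.antisymm [IsLeftCancelMul M] {ν : M → ℕ} (hν : IsAtomicNorm ν)
    (h₁ : LDvd a b) (h₂ : LDvd b a) : a = b := by
  obtain ⟨c, rfl⟩ := h₁
  obtain ⟨d, hd⟩ := h₂
  have hcd : c * d = 1 := mul_left_cancel (a := a) (by rw [← mul_assoc, ← hd, mul_one])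
  rw [hν.eq_one_of_mul_eq_one_left hcd, mul_one]

theorem IsLcmL.unique [IsLeftCancelMul M] {ν : M → ℕ} (hν : IsAtomicNorm ν) {m' : M}
    (h : IsLcmL a b m) (h' : IsLcmL a b m') : m = m' :=
  LDvd.antisymm hν (h.2.2 m' h'.1 h'.2.1) (h'.2.2 m h.1 h.2.1)

theorem ldvd_op_op : LDvd (op a) (op b) ↔ RDvd a b :=
  ⟨fun ⟨c, hc⟩ => ⟨c.unop, congrArg unop hc⟩, fun ⟨c, hc⟩ => ⟨op c, congrArg op hc⟩⟩

theorem IsLcmL.symm (h : IsLcmL a b m) : IsLcmL b a m :=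
  ⟨h.2.1, h.1, fun c h₁ h₂ => h.2.2 c h₂ h₁⟩

theorem IsLcmR.symm (h : IsLcmR a b m) : IsLcmR b a m :=
  ⟨h.2.1, h.1, fun c h₁ h₂ => h.2.2 c h₂ h₁⟩

theorem isLcmL_op_op : IsLcmL (op a) (op b) (op m) ↔ IsLcmR a b m :=
  ⟨fun h => ⟨ldvd_op_op.1 h.1, ldvd_op_op.1 h.2.1, fun c h₁ h₂ =>
      ldvd_op_op.1 (h.2.2 (op c) (ldvd_op_op.2 h₁) (ldvd_op_op.2 h₂))⟩,
    fun h => ⟨ldvd_op_op.2 h.1, ldvd_op_op.2 h.2.1, fun c h₁ h₂ =>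
      ldvd_op_op.2 (h.2.2 c.unop (ldvd_op_op.1 h₁) (ldvd_op_op.1 h₂))⟩⟩

theorem IsLcmL.cancel_left [IsLeftCancelMul M] (h : IsLcmL (x * a) (x * b) m) :
    ∃ m', m = x * m' ∧ IsLcmL a b m' := by
  obtain ⟨s, hs⟩ := h.1
  have hm : m = x * (a * s) := by rw [hs, mul_assoc]
  refine ⟨a * s, hm, ldvd_mul_right a s, ?_, fun c hac hbc => ?_⟩
  · exact LDvd.of_mul_left (hm ▸ h.2.1)
  · exact LDvd.of_mul_left (hm ▸ h.2.2 _ (hac.mul_left x) (hbc.mul_left x))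

theorem IsLcmL.isLcmL_lcm_right {p q : M} (hq : IsLcmL a y q) (hp : IsLcmL x y p)
    (hxa : LDvd x a) : IsLcmL a p q :=
  ⟨hq.1, hp.2.2 q (hxa.trans hq.1) hq.2.1, fun c hac hpc => hq.2.2 c hac (hp.2.1.trans hpc)⟩

theorem IsLcmL.isLcmL_lcm_left {q : M} (hq : IsLcmL a y q) (hm : IsLcmL a b m)
    (hyb : LDvd y b) : IsLcmL q b m :=
  ⟨hq.2.2 m hm.1 (hyb.trans hm.2.1), hm.2.1, fun c hqc hbc => hm.2.2 c (hq.1.trans hqc) hbc⟩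

theorem IsLcmL.mem_of_isSpecial {N : Submonoid M} (hN : IsSpecial N) {m' : M}
    (h : IsLcmL a b m) (h' : IsLcmL a b m') (hm' : m' ∈ N) : m ∈ N := by
  obtain ⟨c, hc⟩ := h.2.2 m' h'.1 h'.2.1
  exact (hN m c (hc ▸ hm')).1

theorem IsLcmR.mem_of_isSpecial {N : Submonoid M} (hN : IsSpecial N) {m' : M}
    (h : IsLcmR a b m) (h' : IsLcmR a b m') (hm' : m' ∈ N) : m ∈ N := by
  obtain ⟨c, hc⟩ := h.2.2 m' h'.1 h'.2.1
  exact (hN c m (hc ▸ hm')).2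

end Divisibility

theorem eq_one_or_exists_mul_of_mem_closure {S : Set M} {a : M} (h : a ∈ closure S) :
    a = 1 ∨ ∃ s ∈ S, ∃ a' ∈ closure S, a = s * a' := by
  induction h using closure_induction_left with
  | one => exact .inl rfl
  | mul_left s hs a' ha' _ => exact .inr ⟨s, hs, a', ha', rfl⟩

theorem mem_of_mem_closure_of_mem_atomSet {X : Set M} (hX : X ⊆ AtomSet M) {y : M}
    (hy : y ∈ AtomSet M) (h : y ∈ closure X) : y ∈ X := by
  rcases eq_one_or_exists_mul_of_mem_closure h with h₁ | ⟨x, hx, a, -, rfl⟩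
  · exact absurd h₁ hy.1
  · rcases hy.2 x a rfl with h₁ | rfl
    · exact absurd h₁ (hX hx).1
    · rwa [mul_one]

theorem IsSpecial.op {N : Submonoid M} (hN : IsSpecial N) : IsSpecial N.op :=
  fun a b h => (hN b.unop a.unop h).symm

def IsSpecialBelow (ν : M → ℕ) (N : Submonoid M) (n : ℕ) : Prop :=
  ∀ a b : M, a * b ∈ N → ν (a * b) < n → a ∈ N ∧ b ∈ N

theorem IsSpecial.isSpecialBelow {N : Submonoid M} (hN : IsSpecial N) (ν : M → ℕ) (n : ℕ) :
    IsSpecialBelow ν N n :=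
  fun a b h _ => hN a b h

theorem IsSpecialBelow.mono {ν : M → ℕ} {N : Submonoid M} {m n : ℕ}
    (h : IsSpecialBelow ν N n) (hmn : m ≤ n) : IsSpecialBelow ν N m :=
  fun a b hab hlt => h a b hab (hlt.trans_le hmn)

theorem forall_mem_of_prod_mem_closure {ν : M → ℕ} (hν : IsAtomicNorm ν) {X : Set M}
    (hX : X ⊆ AtomSet M) {n : ℕ} (hN : IsSpecialBelow ν (closure X) n) {l : List M}
    (hl : ∀ z ∈ l, z ∈ AtomSet M) (hmem : l.prod ∈ closure X) (hlt : ν l.prod < n) :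
    ∀ z ∈ l, z ∈ X := by
  induction l with
  | nil => simp
  | cons z t ih =>
    rw [List.prod_cons] at hmem hlt
    obtain ⟨hz, ht⟩ := hN z t.prod hmem hlt
    refine List.forall_mem_cons.2 ⟨mem_of_mem_closure_of_mem_atomSet hX (hl z (by simp)) hz, ?_⟩
    exact ih (fun w hw => hl w (by simp [hw])) ht ((hν.le_mul_left z _).trans_lt hlt)

def IsLeftSelector (f : M → M → List M) : Prop :=
  ∀ x y : M, x ∈ AtomSet M → y ∈ AtomSet M → x ≠ y → (∃ m, IsLcmL x y m) →
    (∀ l ∈ f x y, l ∈ AtomSet M) ∧ IsLcmL x y (x * (f x y).prod)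

section LeftSelector

variable [IsLeftCancelMul M] {ν : M → ℕ} {X : Set M} {f : M → M → List M}

theorem mem_and_mem_closure_of_atom_mul_mem (hν : IsAtomicNorm ν)
    (hLex : ∀ a b : M, (∃ c, LDvd a c ∧ LDvd b c) → ∃ m, IsLcmL a b m)
    (hX : X ⊆ AtomSet M) (hf : IsLeftSelector f)
    (ha : ∀ x ∈ X, ∀ y ∈ X, x ≠ y → (∃ m, IsLcmL x y m) → ∀ l ∈ f x y, l ∈ X)
    (hb : ∀ x ∈ X, ∀ y ∈ AtomSet M, y ∉ X → (∃ m, IsLcmL x y m) → ¬ ∀ l ∈ f x y, l ∈ X)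
    {y c : M} (hy : y ∈ AtomSet M) (hmem : y * c ∈ closure X)
    (hN : IsSpecialBelow ν (closure X) (ν (y * c))) : y ∈ X ∧ c ∈ closure X := by
  rcases eq_one_or_exists_mul_of_mem_closure hmem with h₁ | ⟨x, hx, t, ht, hxt⟩
  · exact absurd (hν.eq_one_of_mul_eq_one_left h₁) hy.1
  by_cases hxy : x = y
  · subst hxy
    exact ⟨hx, mul_left_cancel hxt ▸ ht⟩
  have hex : ∃ m, IsLcmL x y m := hLex x y ⟨y * c, ⟨t, hxt⟩, ⟨c, rfl⟩⟩
  obtain ⟨hfat, hlcm⟩ := hf x y (hX hx) hy hxy hex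
  obtain ⟨e, he⟩ := hlcm.2.2 (y * c) ⟨t, hxt⟩ ⟨c, rfl⟩
  have hte : t = (f x y).prod * e := mul_left_cancel (a := x) (by rw [← hxt, he, mul_assoc])
  have htlt : ν t < ν (y * c) := hxt ▸ hν.lt_mul_left (hX hx).1 t
  obtain ⟨hu, heN⟩ := hN _ _ (hte ▸ ht) (hte ▸ htlt)
  have hfX : ∀ l ∈ f x y, l ∈ X :=
    forall_mem_of_prod_mem_closure hν hX hN hfat hu ((hν.le_of_ldvd ⟨e, hte⟩).trans_lt htlt)
  have hyX : y ∈ X := by_contra fun hyX => hb x hx y hy hyX hex hfX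
  have hlcm' := (hf y x hy (hX hx) (Ne.symm hxy) ⟨_, hlcm.symm⟩).2
  have hv : (f y x).prod ∈ closure X := list_prod_mem fun l hl =>
    subset_closure (ha y hyX x hx (Ne.symm hxy) ⟨_, hlcm.symm⟩ l hl)
  have hc : c = (f y x).prod * e :=
    mul_left_cancel (a := y) (by rw [← mul_assoc, hlcm'.symm.unique hν hlcm, he])
  exact ⟨hyX, hc ▸ mul_mem hv heN⟩

theorem isSpecial_closure (hν : IsAtomicNorm ν)
    (hLex : ∀ a b : M, (∃ c, LDvd a c ∧ LDvd b c) → ∃ m, IsLcmL a b m)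
    (hgen : closure (AtomSet M) = ⊤) (hX : X ⊆ AtomSet M) (hf : IsLeftSelector f)
    (ha : ∀ x ∈ X, ∀ y ∈ X, x ≠ y → (∃ m, IsLcmL x y m) → ∀ l ∈ f x y, l ∈ X)
    (hb : ∀ x ∈ X, ∀ y ∈ AtomSet M, y ∉ X → (∃ m, IsLcmL x y m) → ¬ ∀ l ∈ f x y, l ∈ X) :
    IsSpecial (closure X) := by
  suffices h : ∀ n, IsSpecialBelow ν (closure X) n from
    fun a b hab => h _ a b hab (Nat.lt_succ_self _)
  intro n
  induction n with
  | zero => exact fun _ _ _ h => absurd h (Nat.not_lt_zero _)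
  | succ n ih =>
    intro b c hbc hlt
    rcases eq_one_or_exists_mul_of_mem_closure (hgen ▸ mem_top b) with rfl | ⟨y, hy, b', -, rfl⟩
    · exact ⟨one_mem _, by rwa [one_mul] at hbc⟩
    rw [mul_assoc] at hbc hlt
    have hle := Nat.lt_succ_iff.1 hlt
    obtain ⟨hyX, hb'c⟩ :=
      mem_and_mem_closure_of_atom_mul_mem hν hLex hX hf ha hb hy hbc (ih.mono hle)
    obtain ⟨hb', hc⟩ := ih b' c hb'c ((hν.lt_mul_left hy.1 _).trans_le hle)
    exact ⟨mul_mem (subset_closure hyX) hb', hc⟩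

end LeftSelector

theorem lcmL_mem_closure [IsLeftCancelMul M] {ν : M → ℕ} (hν : IsAtomicNorm ν)
    (hLex : ∀ a b : M, (∃ c, LDvd a c ∧ LDvd b c) → ∃ m, IsLcmL a b m)
    {X : Set M} (hX1 : (1 : M) ∉ X) (hN : IsSpecial (closure X))
    (hXlcm : ∀ x ∈ X, ∀ y ∈ X, x ≠ y → ∀ m, IsLcmL x y m → m ∈ closure X)
    {a b m : M} (ha : a ∈ closure X) (hb : b ∈ closure X) (hm : IsLcmL a b m) :
    m ∈ closure X := by
  obtain ⟨n, hn⟩ : ∃ n, ν m < n := ⟨_, Nat.lt_succ_self _⟩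
  induction n generalizing a b m with
  | zero => exact absurd hn (Nat.not_lt_zero _)
  | succ n ih =>
    rcases eq_one_or_exists_mul_of_mem_closure ha with rfl | ⟨x, hx, a', ha', rfl⟩
    · obtain ⟨c, hc⟩ := hm.2.2 b (one_ldvd b) (LDvd.refl b)
      exact (hN m c (hc ▸ hb)).1
    rcases eq_one_or_exists_mul_of_mem_closure hb with rfl | ⟨y, hy, b', hb', rfl⟩
    · obtain ⟨c, hc⟩ := hm.2.2 _ (LDvd.refl _) (one_ldvd _)
      exact (hN m c (hc ▸ ha)).1
    have hle := Nat.lt_succ_iff.1 hn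
    have hlt : ∀ {z m' : M}, z ∈ X → LDvd (z * m') m → ν m' < n := fun hz h =>
      (hν.lt_mul_left (ne_of_mem_of_not_mem hz hX1) _).trans_le ((hν.le_of_ldvd h).trans hle)
    by_cases hxy : x = y
    · subst hxy
      obtain ⟨m', rfl, hm'⟩ := hm.cancel_left
      exact mul_mem (subset_closure hx) (ih ha' hb' hm' (hlt hx (LDvd.refl _)))
    have hym : LDvd y m := (ldvd_mul_right y b').trans hm.2.1
    obtain ⟨p, hp⟩ := hLex x y ⟨m, (ldvd_mul_right x a').trans hm.1, hym⟩
    obtain ⟨u, rfl⟩ := hp.1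
    have hu : u ∈ closure X := (hN x u (hXlcm x hx y hy hxy _ hp)).2
    -- `q := a ∨ y` is `x * (a' ∨ u)` as `x ∨ y = x * u`; then `m = q ∨ b = y * (q' ∨ b')`.
    obtain ⟨q, hq⟩ := hLex (x * a') y ⟨m, hm.1, hym⟩
    have hqm : LDvd q m := hq.2.2 m hm.1 hym
    obtain ⟨r, rfl, hr⟩ := (hq.isLcmL_lcm_right hp (ldvd_mul_right x a')).cancel_left
    have hq' : x * r ∈ closure X := mul_mem (subset_closure hx) (ih ha' hu hr (hlt hx hqm))
    obtain ⟨q', hq'y⟩ := hq.2.1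
    have hmq : IsLcmL (y * q') (y * b') m := hq'y ▸ hq.isLcmL_lcm_left hm (ldvd_mul_right y b')
    obtain ⟨m', rfl, hm'⟩ := hmq.cancel_left
    exact mul_mem (subset_closure hy)
      (ih (hN y q' (hq'y ▸ hq')).2 hb' hm' (hlt hy (LDvd.refl _)))

theorem lcmR_mem_closure [IsRightCancelMul M] {ν : M → ℕ} (hν : IsAtomicNorm ν)
    (hRex : ∀ a b : M, (∃ c, RDvd a c ∧ RDvd b c) → ∃ m, IsLcmR a b m)
    {X : Set M} (hX1 : (1 : M) ∉ X) (hN : IsSpecial (closure X))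
    (hXlcm : ∀ x ∈ X, ∀ y ∈ X, x ≠ y → ∀ m, IsLcmR x y m → m ∈ closure X)
    {a b m : M} (ha : a ∈ closure X) (hb : b ∈ closure X) (hm : IsLcmR a b m) :
    m ∈ closure X := by
  have hLex : ∀ a b : Mᵐᵒᵖ, (∃ c, LDvd a c ∧ LDvd b c) → ∃ m, IsLcmL a b m := by
    rintro a b ⟨c, hac, hbc⟩
    obtain ⟨m, hm⟩ := hRex a.unop b.unop ⟨c.unop, ldvd_op_op.1 hac, ldvd_op_op.1 hbc⟩
    exact ⟨op m, isLcmL_op_op.2 hm⟩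
  have hNop : IsSpecial (closure (unop ⁻¹' X)) := op_closure X ▸ hN.op
  have hXlcmop : ∀ x ∈ unop ⁻¹' X, ∀ y ∈ unop ⁻¹' X, x ≠ y → ∀ m, IsLcmL x y m →
      m ∈ closure (unop ⁻¹' X) := fun x hx y hy hxy m hm =>
    op_closure X ▸ hXlcm x.unop hx y.unop hy (unop_injective.ne hxy) m.unop (isLcmL_op_op.1 hm)
  have := lcmL_mem_closure hν.comp_unop hLex hX1 hNop hXlcmop
    (op_closure X ▸ ha : op a ∈ _) (op_closure X ▸ hb : op b ∈ _) (isLcmL_op_op.2 hm)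
  rwa [← op_closure] at this

theorem forall_mem_of_isParabolic_of_isLcmL {ν : M → ℕ} (hν : IsAtomicNorm ν) {X : Set M}
    (hX : X ⊆ AtomSet M) (hP : IsParabolic (closure X)) {x y : M} (hx : x ∈ X) (hy : y ∈ X)
    {l : List M} (hl : ∀ z ∈ l, z ∈ AtomSet M) (hlcm : IsLcmL x y (x * l.prod)) :
    ∀ z ∈ l, z ∈ X :=
  have hm := hP.2.1 x y _ (subset_closure hx) (subset_closure hy) hlcm
  forall_mem_of_prod_mem_closure hν hX (hP.1.isSpecialBelow ν _) hl (hP.1 _ _ hm).2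
    (Nat.lt_succ_self _)

theorem forall_mem_of_isParabolic_of_isLcmR {ν : M → ℕ} (hν : IsAtomicNorm ν) {X : Set M}
    (hX : X ⊆ AtomSet M) (hP : IsParabolic (closure X)) {x y : M} (hx : x ∈ X) (hy : y ∈ X)
    {l : List M} (hl : ∀ z ∈ l, z ∈ AtomSet M) (hlcm : IsLcmR x y (l.prod * y)) :
    ∀ z ∈ l, z ∈ X :=
  have hm := hP.2.2 x y _ (subset_closure hx) (subset_closure hy) hlcm
  forall_mem_of_prod_mem_closure hν hX (hP.1.isSpecialBelow ν _) hl (hP.1 _ _ hm).1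
    (Nat.lt_succ_self _)

theorem mem_closure_of_isLcmL_mul_prod {X : Set M} (hN : IsSpecial (closure X)) {x y m : M}
    (hx : x ∈ X) {l : List M} (hl : ∀ z ∈ l, z ∈ X) (h : IsLcmL x y (x * l.prod))
    (hm : IsLcmL x y m) : m ∈ closure X :=
  hm.mem_of_isSpecial hN h <|
    mul_mem (subset_closure hx) (list_prod_mem fun z hz => subset_closure (hl z hz))

theorem mem_closure_of_isLcmR_prod_mul {X : Set M} (hN : IsSpecial (closure X)) {x y m : M}
    (hx : x ∈ X) {l : List M} (hl : ∀ z ∈ l, z ∈ X) (h : IsLcmR x y (l.prod * x))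
    (hm : IsLcmR x y m) : m ∈ closure X :=
  hm.mem_of_isSpecial hN h <|
    mul_mem (list_prod_mem fun z hz => subset_closure (hl z hz)) (subset_closure hx)

theorem not_forall_mem_of_isSpecial_of_isLcmL {X : Set M} (hX : X ⊆ AtomSet M)
    (hN : IsSpecial (closure X)) {x y : M} (hx : x ∈ X) (hy : y ∈ AtomSet M) (hyX : y ∉ X)
    {l l' : List M} (h : IsLcmL x y (x * l.prod)) (h' : IsLcmL x y (y * l'.prod)) :
    ¬ ∀ z ∈ l, z ∈ X := fun hl =>
  have hm := mem_closure_of_isLcmL_mul_prod hN hx hl h h'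
  hyX (mem_of_mem_closure_of_mem_atomSet hX hy (hN _ _ hm).1)

theorem not_forall_mem_of_isSpecial_of_isLcmR {X : Set M} (hX : X ⊆ AtomSet M)
    (hN : IsSpecial (closure X)) {x y : M} (hx : x ∈ X) (hy : y ∈ AtomSet M) (hyX : y ∉ X)
    {l l' : List M} (h : IsLcmR x y (l.prod * x)) (h' : IsLcmR x y (l'.prod * y)) :
    ¬ ∀ z ∈ l, z ∈ X := fun hl =>
  have hm := mem_closure_of_isLcmR_prod_mul hN hx hl h h'
  hyX (mem_of_mem_closure_of_mem_atomSet hX hy (hN _ _ hm).2)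


/-- **Theorem 2.8.** Characterization of the subsets `X` of the set of atoms generating
a parabolic submonoid, in terms of a left selector `f_L` and a right selector `f_R`
on the atoms. -/
theorem theorem_2_8 {M : Type*} [Monoid M] (hM : IsPreGarside M)
    (hgen : Submonoid.closure (AtomSet M) = ⊤)
    (fL fR : M → M → List M)
    (hfL : ∀ x y : M, x ∈ AtomSet M → y ∈ AtomSet M → x ≠ y →
      (∃ m : M, IsLcmL x y m) →
      (∀ l ∈ fL x y, l ∈ AtomSet M) ∧ IsLcmL x y (x * (fL x y).prod) ∧
        IsLcmL x y (y * (fL y x).prod))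
    (hfR : ∀ x y : M, x ∈ AtomSet M → y ∈ AtomSet M → x ≠ y →
      (∃ m : M, IsLcmR x y m) →
      (∀ l ∈ fR x y, l ∈ AtomSet M) ∧ IsLcmR x y ((fR y x).prod * x) ∧
        IsLcmR x y ((fR x y).prod * y))
    (X : Set M) (hX : X ⊆ AtomSet M) :
    IsParabolic (Submonoid.closure X) ↔
      ((∀ x ∈ X, ∀ y ∈ X, x ≠ y →
          ((∃ m : M, IsLcmL x y m) → (∀ l ∈ fL x y, l ∈ X) ∧ ∀ l ∈ fL y x, l ∈ X) ∧
          ((∃ m : M, IsLcmR x y m) → (∀ l ∈ fR x y, l ∈ X) ∧ ∀ l ∈ fR y x, l ∈ X)) ∧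
        ∀ x ∈ X, ∀ y ∈ AtomSet M, y ∉ X →
          ((∃ m : M, IsLcmL x y m) → ¬ ∀ l ∈ fL x y, l ∈ X) ∧
          ((∃ m : M, IsLcmR x y m) → ¬ ∀ l ∈ fR y x, l ∈ X)) := by
  obtain ⟨hcancel, ⟨ν, hν⟩, hLex, hRex⟩ := hM
  have := hcancel.isCancelMul
  constructor
  · intro hP
    refine ⟨fun x hx y hy hne => ⟨fun hex => ?_, fun hex => ?_⟩,
      fun x hx y hy hyX => ⟨fun hex => ?_, fun hex => ?_⟩⟩
    · obtain ⟨hl, h, h'⟩ := hfL x y (hX hx) (hX hy) hne hex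
      have hl' := (hfL y x (hX hy) (hX hx) hne.symm ⟨_, h.symm⟩).1
      exact ⟨forall_mem_of_isParabolic_of_isLcmL hν hX hP hx hy hl h,
        forall_mem_of_isParabolic_of_isLcmL hν hX hP hy hx hl' h'.symm⟩
    · obtain ⟨hl, h, h'⟩ := hfR x y (hX hx) (hX hy) hne hex
      have hl' := (hfR y x (hX hy) (hX hx) hne.symm ⟨_, h.symm⟩).1
      exact ⟨forall_mem_of_isParabolic_of_isLcmR hν hX hP hx hy hl h',
        forall_mem_of_isParabolic_of_isLcmR hν hX hP hy hx hl' h.symm⟩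
    · obtain ⟨-, h, h'⟩ := hfL x y (hX hx) hy (ne_of_mem_of_not_mem hx hyX) hex
      exact not_forall_mem_of_isSpecial_of_isLcmL hX hP.1 hx hy hyX h h'
    · obtain ⟨-, h, h'⟩ := hfR x y (hX hx) hy (ne_of_mem_of_not_mem hx hyX) hex
      exact not_forall_mem_of_isSpecial_of_isLcmR hX hP.1 hx hy hyX h h'
  · rintro ⟨ha, hb⟩
    have hX1 : (1 : M) ∉ X := fun h => (hX h).1 rfl
    have hN := isSpecial_closure hν hLex hgen hX
      (fun x y hx hy hne hex => ⟨(hfL x y hx hy hne hex).1, (hfL x y hx hy hne hex).2.1⟩)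
      (fun x hx y hy hne hex => ((ha x hx y hy hne).1 hex).1)
      (fun x hx y hy hyX hex => (hb x hx y hy hyX).1 hex)
    refine ⟨hN, fun a b m => lcmL_mem_closure hν hLex hX1 hN ?_,
      fun a b m => lcmR_mem_closure hν hRex hX1 hN ?_⟩
    · exact fun x hx y hy hne m hm => mem_closure_of_isLcmL_mul_prod hN hx
        ((ha x hx y hy hne).1 ⟨m, hm⟩).1 (hfL x y (hX hx) (hX hy) hne ⟨m, hm⟩).2.1 hm
    · exact fun x hx y hy hne m hm => mem_closure_of_isLcmR_prod_mul hN hx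
        ((ha x hx y hy hne).2 ⟨m, hm⟩).2 (hfR x y (hX hx) (hX hy) hne ⟨m, hm⟩).2.1 hm

end PG
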